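/- Let f : [0,∞) → ℝ be continuous and positive, let β₃ ∈ (0,1), t₀ > 0 and C₁ > 0, and suppose f(t) ≤ C₁ F(t)^{β₃} for all t ≥ t₀. Then there exist constants C₂, C₃ > 0 and t₁ ≥ t₀ such that F(t) ≤ C₂ t^{1/(1−β₃)} and f(t) ≤ C₃ t^{β₃/(1−β₃)} for all t ≥ t₁. -/

import Mathlib

/-!
Along `t ≥ t₀` the function `F` solves the differential inequality `F' ≤ C₁ F ^ β₃`, so
`(F ^ (1 - β₃))' = (1 - β₃) F' F ^ (-β₃) ≤ (1 - β₃) C₁`. Hence `F ^ (1 - β₃)` grows at most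
linearly, which is the bound on `F`; the bound on `f` follows by inserting it into the
hypothesis `f ≤ C₁ F ^ β₃`.
-/

open Filter Set MeasureTheory intervalIntegral

theorem hasDerivAt_integral_of_continuousOn_Ici {f : ℝ → ℝ} {a x : ℝ}
    (hf : ContinuousOn f (Ici a)) (hx : a < x) :
    HasDerivAt (fun t => ∫ s in a..t, f s) (f x) x :=
  integral_hasDerivAt_right
    (hf.mono (by rw [uIcc_of_le hx.le]; exact Icc_subset_Ici_self)).intervalIntegrable
    ((hf.mono Ioi_subset_Ici_self).stronglyMeasurableAtFilter isOpen_Ioi x hx)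
    (hf.continuousAt (Ici_mem_nhds hx))

section SublinearGrowth

variable {F f : ℝ → ℝ} {a β C : ℝ}

theorem rpow_sub_rpow_le_of_hasDerivAt_le_mul_rpow (hF : ∀ x ≥ a, HasDerivAt F (f x) x)
    (hFpos : ∀ x ≥ a, 0 < F x) (hf : ∀ x ≥ a, f x ≤ C * F x ^ β) (hβ : β < 1)
    {t : ℝ} (ht : a ≤ t) :
    F t ^ (1 - β) - F a ^ (1 - β) ≤ (1 - β) * C * (t - a) := by
  have hG : ∀ x ≥ a,
      HasDerivAt (fun y => F y ^ (1 - β)) (f x * (1 - β) * F x ^ (1 - β - 1)) x :=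
    fun x hx => (hF x hx).rpow_const (Or.inl (hFpos x hx).ne')
  have hG_le : ∀ x ≥ a, f x * (1 - β) * F x ^ (1 - β - 1) ≤ (1 - β) * C := fun x hx => by
    have hFx := hFpos x hx
    calc f x * (1 - β) * F x ^ (1 - β - 1)
        ≤ C * F x ^ β * (1 - β) * F x ^ (-β) := by
          rw [sub_sub_cancel_left]
          gcongr
          exact hf x hx
      _ = (1 - β) * C * (F x ^ β * F x ^ (-β)) := by ring
      _ = (1 - β) * C := by rw [← Real.rpow_add hFx, add_neg_cancel, Real.rpow_zero, mul_one]
  have hle_of_interior : ∀ {x}, x ∈ interior (Ici a) → a ≤ x := fun hx => interior_subset hx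
  exact (convex_Ici a).image_sub_le_mul_sub_of_deriv_le
    (fun x hx => (hG x hx).continuousAt.continuousWithinAt)
    (fun x hx => (hG x (hle_of_interior hx)).differentiableAt.differentiableWithinAt)
    (fun x hx => (hG x (hle_of_interior hx)).deriv ▸ hG_le x (hle_of_interior hx))
    a (mem_Ici.2 le_rfl) t ht ht

theorem exists_le_mul_rpow_of_hasDerivAt_le_mul_rpow (hF : ∀ x ≥ a, HasDerivAt F (f x) x)
    (hFpos : ∀ x ≥ a, 0 < F x) (hf : ∀ x ≥ a, f x ≤ C * F x ^ β) (hβ : β < 1)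
    (ha : 0 < a) (hC : 0 ≤ C) :
    ∃ K > 0, ∀ t ≥ a, F t ≤ K * t ^ (1 / (1 - β)) := by
  have hp : 0 < 1 - β := by linarith
  set K := F a ^ (1 - β) / a + (1 - β) * C
  have hFa : 0 < F a ^ (1 - β) := Real.rpow_pos_of_pos (hFpos a le_rfl) _
  have hK : 0 < K := by positivity
  have hlin : ∀ t ≥ a, F t ^ (1 - β) ≤ K * t := fun t ht => by
    have hgrowth := rpow_sub_rpow_le_of_hasDerivAt_le_mul_rpow hF hFpos hf hβ ht
    have hFa_le : F a ^ (1 - β) ≤ F a ^ (1 - β) / a * t := by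
      rw [div_mul_eq_mul_div, le_div_iff₀ ha]
      gcongr
    calc F t ^ (1 - β) ≤ F a ^ (1 - β) + (1 - β) * C * (t - a) := by linarith
      _ ≤ F a ^ (1 - β) / a * t + (1 - β) * C * t := by gcongr; linarith
      _ = K * t := (add_mul _ _ _).symm
  refine ⟨K ^ (1 / (1 - β)), by positivity, fun t ht => ?_⟩
  have ht0 : 0 ≤ t := ha.le.trans ht
  rw [← Real.mul_rpow hK.le ht0, one_div,
    Real.le_rpow_inv_iff_of_pos (hFpos t ht).le (by positivity) hp]
  exact hlin t ht

end SublinearGrowth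

/-- Let `f : [0,∞) → ℝ` be continuous and positive, `β₃ ∈ (0,1)`, `t₀ > 0`,
`C₁ > 0`, with `f(t) ≤ C₁ F(t)^{β₃}` for all `t ≥ t₀`. Then there are `C₂, C₃ > 0` and
`t₁ ≥ t₀` with `F(t) ≤ C₂ t^{1/(1−β₃)}` and `f(t) ≤ C₃ t^{β₃/(1−β₃)}` for all `t ≥ t₁`,
where `F(t) = ∫₀^t f(s) ds`. -/
theorem stmt_10 (f F : ℝ → ℝ) (β₃ t₀ C₁ : ℝ)
    (hf : ContinuousOn f (Set.Ici 0))
    (hpos : ∀ t ≥ (0:ℝ), 0 < f t)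
    (hβ₃0 : 0 < β₃) (hβ₃1 : β₃ < 1) (ht₀ : 0 < t₀) (hC₁ : 0 < C₁)
    (hyp : ∀ t ≥ t₀, f t ≤ C₁ * F t ^ β₃)
    (hF : ∀ t, F t = ∫ s in (0:ℝ)..t, f s) :
    ∃ C₂ > (0:ℝ), ∃ C₃ > (0:ℝ), ∃ t₁ ≥ t₀,
      ∀ t ≥ t₁, F t ≤ C₂ * t ^ ((1:ℝ) / (1 - β₃)) ∧ f t ≤ C₃ * t ^ (β₃ / (1 - β₃)) := by
  have hFpos : ∀ t ≥ t₀, 0 < F t := fun t ht => by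
    have ht0 : 0 < t := ht₀.trans_le ht
    rw [hF]
    exact intervalIntegral_pos_of_pos_on
      (hf.mono (by rw [uIcc_of_le ht0.le]; exact Icc_subset_Ici_self)).intervalIntegrable
      (fun s hs => hpos s hs.1.le) ht0
  have hFderiv : ∀ t ≥ t₀, HasDerivAt F (f t) t := fun t ht =>
    (hasDerivAt_integral_of_continuousOn_Ici hf (ht₀.trans_le ht)).congr_of_eventuallyEq
      (Eventually.of_forall hF)
  obtain ⟨C₂, hC₂, hFle⟩ :=
    exists_le_mul_rpow_of_hasDerivAt_le_mul_rpow hFderiv hFpos hyp hβ₃1 ht₀ hC₁.le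
  refine ⟨C₂, hC₂, C₁ * C₂ ^ β₃, by positivity, t₀, le_rfl, fun t ht => ⟨hFle t ht, ?_⟩⟩
  have ht0 : 0 ≤ t := ht₀.le.trans ht
  calc f t ≤ C₁ * F t ^ β₃ := hyp t ht
    _ ≤ C₁ * (C₂ * t ^ (1 / (1 - β₃))) ^ β₃ := by
        gcongr
        · exact (hFpos t ht).le
        · exact hFle t ht
    _ = C₁ * C₂ ^ β₃ * t ^ (β₃ / (1 - β₃)) := by
        rw [Real.mul_rpow hC₂.le (by positivity), ← Real.rpow_mul ht0, one_div_mul_eq_div]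
        ring
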